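/- arXiv:1205.4590 — 3 statements merged into one kernel-verified Lean document; each statement's English description precedes it below -/
import Mathlib

section
/- Let Γ be smooth torsion-free connection coefficients on an open set U ⊆ ℝⁿ (n ≥ 2), let X : I → U be a smooth curve, let φ(x) = Λx + C be an affine map with Λ an invertible n×n real matrix and C ∈ ℝⁿ, and let Γ̃ be the transformed connection coefficients on Ũ = φ(U). Then for every smooth map ξ : I → ℝⁿ and every s ∈ I, the quadratic remainder operator transforms tensorially: Δ̃^μ[Λξ](s) = Λ^μ_ν Δ^ν[ξ](s), where Δ is formed from Γ along X and Δ̃ is formed from Γ̃ along φ∘X. -/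
/-! For an affine map `φ x = Λ x + C` the second derivatives of `φ` vanish, so the transformation
law says that `Γ̃ (φ x)` is the pushforward of `Γ x` under the constant matrix `Λ`, for every
`x ∈ U`. This relation is linear and holds on a neighbourhood of `X s`, so it passes to directional
derivatives: `DΓ̃ (φ (X s)) [Λ ξ]` is the pushforward of `DΓ (X s) [ξ]`. Velocities are multiplied
by `Λ` as well, and each term of `Δ` contracts one of these two tensors with two velocities. -/

open Set ContDiff

noncomputable section

/-- The partial derivative of `f` in the `μ`-th coordinate direction at `x`. -/
def pd {n : ℕ} (μ : Fin n) (f : (Fin n → ℝ) → ℝ) (x : Fin n → ℝ) : ℝ :=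
  fderiv ℝ f x (Pi.single μ 1)

/-- `Γ` is a family of smooth, torsion-free connection coefficients on `U`:
`Γ x μ ν σ` stands for `Γ^μ_{νσ}(x)`. -/
def IsConnCoeff {n : ℕ} (U : Set (Fin n → ℝ))
    (Γ : (Fin n → ℝ) → Fin n → Fin n → Fin n → ℝ) : Prop :=
  (∀ μ ν σ : Fin n, ContDiffOn ℝ ∞ (fun x => Γ x μ ν σ) U) ∧
  (∀ x ∈ U, ∀ μ ν σ : Fin n, Γ x μ ν σ = Γ x μ σ ν)

/-- `X` is an affinely parametrized geodesic of `Γ` on the interval `I`. -/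
def IsGeodesic {n : ℕ} (Γ : (Fin n → ℝ) → Fin n → Fin n → Fin n → ℝ)
    (I : Set ℝ) (X : ℝ → Fin n → ℝ) : Prop :=
  ∀ s ∈ I, ∀ μ : Fin n,
    deriv (deriv (fun t => X t μ)) s
      + ∑ ν, ∑ σ, Γ (X s) μ ν σ * deriv (fun t => X t ν) s * deriv (fun t => X t σ) s = 0

/-- The generalized Jacobi operator `G^μ[ξ](s)` along the curve `X` for the
connection coefficients `Γ`. -/
def genJacobiOp {n : ℕ} (Γ : (Fin n → ℝ) → Fin n → Fin n → Fin n → ℝ)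
    (X ξ : ℝ → Fin n → ℝ) (μ : Fin n) (s : ℝ) : ℝ :=
  deriv (deriv (fun t => ξ t μ)) s
    + (∑ ν, ∑ σ, Γ (X s) μ ν σ *
        (2 * deriv (fun t => ξ t ν) s * deriv (fun t => X t σ) s
          + deriv (fun t => ξ t ν) s * deriv (fun t => ξ t σ) s))
    + ∑ ν, ∑ σ, ∑ α, pd α (fun x => Γ x μ ν σ) (X s) * ξ s α *
        (deriv (fun t => X t ν) s + deriv (fun t => ξ t ν) s) *
        (deriv (fun t => X t σ) s + deriv (fun t => ξ t σ) s)

/-- `ξ` is a generalized Jacobi field along `X` on the interval `I`. -/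
def IsGenJacobiField {n : ℕ} (Γ : (Fin n → ℝ) → Fin n → Fin n → Fin n → ℝ)
    (I : Set ℝ) (X ξ : ℝ → Fin n → ℝ) : Prop :=
  ∀ s ∈ I, ∀ μ : Fin n, genJacobiOp Γ X ξ μ s = 0

/-- `Γt` represents the transformed connection coefficients of `Γ` under the
coordinate change `φ`:
`(∂φ^λ/∂x^α) Γ^α_{νσ} = Γt^λ_{αβ}(φ x) (∂φ^α/∂x^ν)(∂φ^β/∂x^σ) + ∂²φ^λ/∂x^ν∂x^σ` on `U`. -/
def TransformedConn {n : ℕ} (U : Set (Fin n → ℝ)) (φ : (Fin n → ℝ) → Fin n → ℝ)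
    (Γ Γt : (Fin n → ℝ) → Fin n → Fin n → Fin n → ℝ) : Prop :=
  ∀ x ∈ U, ∀ lam ν σ : Fin n,
    ∑ α, pd α (fun y => φ y lam) x * Γ x α ν σ
      = (∑ α, ∑ β, Γt (φ x) lam α β * pd ν (fun y => φ y α) x * pd σ (fun y => φ y β) x)
        + pd ν (fun y => pd σ (fun z => φ z lam) y) x

/-- `φ` is a smooth diffeomorphism from the open set `U` onto the open set `φ '' U`. -/
def IsDiffeoOn {n : ℕ} (φ : (Fin n → ℝ) → Fin n → ℝ) (U : Set (Fin n → ℝ)) : Prop :=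
  ContDiffOn ℝ ∞ φ U ∧ IsOpen (φ '' U) ∧
    ∃ ψ : (Fin n → ℝ) → Fin n → ℝ, ContDiffOn ℝ ∞ ψ (φ '' U) ∧
      (∀ x ∈ U, ψ (φ x) = x) ∧ ∀ y ∈ φ '' U, ψ y ∈ U

/-- The quadratic remainder operator `Δ^μ[ξ](s)` along the curve `X` for the
connection coefficients `Γ`. -/
def deltaOp {n : ℕ} (Γ : (Fin n → ℝ) → Fin n → Fin n → Fin n → ℝ)
    (X ξ : ℝ → Fin n → ℝ) (μ : Fin n) (s : ℝ) : ℝ :=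
  (∑ ν, ∑ σ, Γ (X s) μ ν σ * deriv (fun t => ξ t ν) s * deriv (fun t => ξ t σ) s)
    + 2 * (∑ ν, ∑ σ, ∑ α, pd α (fun x => Γ x μ ν σ) (X s) * ξ s α *
        deriv (fun t => X t ν) s * deriv (fun t => ξ t σ) s)
    + ∑ ν, ∑ σ, ∑ α, pd α (fun x => Γ x μ ν σ) (X s) * ξ s α *
        deriv (fun t => ξ t ν) s * deriv (fun t => ξ t σ) s

open Matrix Filter Topology

namespace ConnCoeff

variable {n : ℕ}

theorem sum_comm₄ {ι κ ι' κ' M : Type*} [Fintype ι] [Fintype κ] [Fintype ι'] [Fintype κ']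
    [AddCommMonoid M] (f : ι → κ → ι' → κ' → M) :
    ∑ a, ∑ b, ∑ c, ∑ d, f a b c d = ∑ c, ∑ d, ∑ a, ∑ b, f a b c d := by
  rw [Finset.sum_comm_cycle]
  exact Finset.sum_congr rfl fun _ _ => Finset.sum_comm_cycle

def contract (T : Fin n → Fin n → Fin n → ℝ) (v w : Fin n → ℝ) : Fin n → ℝ :=
  fun μ => ∑ ν, ∑ σ, T μ ν σ * v ν * w σ

/-- Index form of `Λ (T (v, w)) = T' (Λ v, Λ w)`. -/
def IsPushforward (Λ : Matrix (Fin n) (Fin n) ℝ) (T T' : Fin n → Fin n → Fin n → ℝ) : Prop :=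
  ∀ μ ν σ, ∑ ρ, Λ μ ρ * T ρ ν σ = ∑ α, ∑ β, T' μ α β * Λ α ν * Λ β σ

def fderivTensor (Γ : (Fin n → ℝ) → Fin n → Fin n → Fin n → ℝ) (x v : Fin n → ℝ) :
    Fin n → Fin n → Fin n → ℝ :=
  fun μ ν σ => fderiv ℝ (fun y => Γ y μ ν σ) x v

def velocity (c : ℝ → Fin n → ℝ) (s : ℝ) : Fin n → ℝ :=
  fun k => deriv (fun t => c t k) s

theorem IsPushforward.contract_mulVec {Λ : Matrix (Fin n) (Fin n) ℝ}
    {T T' : Fin n → Fin n → Fin n → ℝ} (h : IsPushforward Λ T T') (v w : Fin n → ℝ) :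
    contract T' (Λ *ᵥ v) (Λ *ᵥ w) = Λ *ᵥ contract T v w := by
  ext μ
  calc contract T' (Λ *ᵥ v) (Λ *ᵥ w) μ
      = ∑ ν, ∑ σ, (∑ α, ∑ β, T' μ α β * Λ α ν * Λ β σ) * v ν * w σ := by
        simp only [contract, mulVec, dotProduct, Finset.mul_sum, Finset.sum_mul]
        rw [sum_comm₄, Finset.sum_comm]
        simp only [mul_comm, mul_left_comm]
    _ = ∑ ν, ∑ σ, (∑ ρ, Λ μ ρ * T ρ ν σ) * v ν * w σ := by simp only [h μ]
    _ = (Λ *ᵥ contract T v w) μ := by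
        simp only [contract, mulVec, dotProduct, Finset.mul_sum, Finset.sum_mul]
        rw [Finset.sum_comm_cycle]
        simp only [mul_comm, mul_left_comm]

theorem contract_single_single (T : Fin n → Fin n → Fin n → ℝ) (a b : Fin n) :
    contract T (Pi.single a 1) (Pi.single b 1) = fun μ => T μ a b := by
  ext μ
  simp [contract, Pi.single_apply]

theorem IsPushforward.eq_mulVec_contract {Λ M : Matrix (Fin n) (Fin n) ℝ}
    {T T' : Fin n → Fin n → Fin n → ℝ} (h : IsPushforward Λ T T') (hΛM : Λ * M = 1)
    (μ a b : Fin n) :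
    T' μ a b = (Λ *ᵥ contract T (M *ᵥ Pi.single a 1) (M *ᵥ Pi.single b 1)) μ := by
  rw [← h.contract_mulVec, mulVec_mulVec, mulVec_mulVec, hΛM, one_mulVec, one_mulVec,
    contract_single_single]

theorem differentiableAt_of_eventually_isPushforward {Λ : Matrix (Fin n) (Fin n) ℝ}
    {Γ G : (Fin n → ℝ) → Fin n → Fin n → Fin n → ℝ} {x : Fin n → ℝ} (hΛ : IsUnit Λ)
    (h : ∀ᶠ y in 𝓝 x, IsPushforward Λ (Γ y) (G y))
    (hΓ : ∀ μ ν σ, DifferentiableAt ℝ (fun y => Γ y μ ν σ) x) (μ a b : Fin n) :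
    DifferentiableAt ℝ (fun y => G y μ a b) x := by
  obtain ⟨M, hΛM⟩ := hΛ.exists_right_inv
  refine DifferentiableAt.congr_of_eventuallyEq ?_
    (h.mono fun y hy => hy.eq_mulVec_contract hΛM μ a b)
  simp only [contract, mulVec, dotProduct]
  fun_prop

/-- The pushforward relation is linear in `(T, T')`, so holding near `x` it passes to
directional derivatives at `x`. -/
theorem IsPushforward.fderivTensor_of_eventually {Λ : Matrix (Fin n) (Fin n) ℝ}
    {Γ G : (Fin n → ℝ) → Fin n → Fin n → Fin n → ℝ} {x : Fin n → ℝ} (hΛ : IsUnit Λ)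
    (h : ∀ᶠ y in 𝓝 x, IsPushforward Λ (Γ y) (G y))
    (hΓ : ∀ μ ν σ, DifferentiableAt ℝ (fun y => Γ y μ ν σ) x) (v : Fin n → ℝ) :
    IsPushforward Λ (fderivTensor Γ x v) (fderivTensor G x v) := by
  have hG := differentiableAt_of_eventually_isPushforward hΛ h hΓ
  intro μ ν σ
  have hL : HasFDerivAt (fun y => ∑ ρ, Λ μ ρ * Γ y ρ ν σ)
      (∑ ρ, Λ μ ρ • fderiv ℝ (fun y => Γ y ρ ν σ) x) x :=
    HasFDerivAt.fun_sum fun ρ _ => (hΓ ρ ν σ).hasFDerivAt.const_mul _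
  have hR : HasFDerivAt (fun y => ∑ α, ∑ β, G y μ α β * Λ α ν * Λ β σ)
      (∑ α, ∑ β, (Λ α ν * Λ β σ) • fderiv ℝ (fun y => G y μ α β) x) x := by
    refine HasFDerivAt.fun_sum fun α _ => HasFDerivAt.fun_sum fun β _ => ?_
    simpa only [mul_assoc, smul_eq_mul] using (hG μ α β).hasFDerivAt.mul_const (Λ α ν * Λ β σ)
  have := hL.unique (hR.congr_of_eventuallyEq (h.mono fun y hy => hy μ ν σ))
  simpa [fderivTensor, mul_comm, mul_assoc, mul_left_comm] using congrArg (· v) this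

theorem fderivTensor_comp_mulVec_add {Λ : Matrix (Fin n) (Fin n) ℝ} (hΛ : IsUnit Λ)
    (Γ : (Fin n → ℝ) → Fin n → Fin n → Fin n → ℝ) (C x v : Fin n → ℝ) :
    fderivTensor (fun y => Γ (Λ *ᵥ y + C)) x v = fderivTensor Γ (Λ *ᵥ x + C) (Λ *ᵥ v) := by
  let e := (Matrix.toLinearEquiv' Λ hΛ.invertible).toContinuousLinearEquiv
  ext μ ν σ
  have he : (fun y => Γ (Λ *ᵥ y + C) μ ν σ) = (fun z => Γ (z + C) μ ν σ) ∘ e := rfl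
  rw [fderivTensor, he, e.comp_right_fderiv, ContinuousLinearMap.comp_apply,
    fderiv_comp_add_right (f := fun w => Γ w μ ν σ)]
  rfl

theorem fderiv_apply_eq_sum_pd (f : (Fin n → ℝ) → ℝ) (x v : Fin n → ℝ) :
    fderiv ℝ f x v = ∑ α, pd α f x * v α := by
  conv_lhs => rw [← Finset.univ_sum_single v]
  simp only [map_sum, pd, mul_comm]
  refine Finset.sum_congr rfl fun α _ => ?_
  rw [← smul_eq_mul, ← map_smul, ← Pi.single_smul', smul_eq_mul, mul_one]

theorem pd_mulVec_add (Λ : Matrix (Fin n) (Fin n) ℝ) (C x : Fin n → ℝ) (lam ν : Fin n) :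
    pd ν (fun y => (Λ *ᵥ y + C) lam) x = Λ lam ν := by
  let L := (ContinuousLinearMap.proj lam).comp (Matrix.mulVecLin Λ).toContinuousLinearMap
  have hL : HasFDerivAt (fun y => (Λ *ᵥ y + C) lam) L x := L.hasFDerivAt.add_const (C lam)
  rw [pd, hL.fderiv]
  simp [L]

theorem pd_const (ν : Fin n) (c : ℝ) (x : Fin n → ℝ) : pd ν (fun _ => c) x = 0 := by
  simp [pd]

theorem TransformedConn.isPushforward_of_affine {U : Set (Fin n → ℝ)}
    {Λ : Matrix (Fin n) (Fin n) ℝ} {C : Fin n → ℝ} {Γ Γt : (Fin n → ℝ) → Fin n → Fin n → Fin n → ℝ}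
    (h : TransformedConn U (fun x => Λ *ᵥ x + C) Γ Γt) {x : Fin n → ℝ} (hx : x ∈ U) :
    IsPushforward Λ (Γ x) (Γt (Λ *ᵥ x + C)) := fun μ ν σ => by
  simpa only [pd_mulVec_add, pd_const, add_zero] using h x hx μ ν σ

theorem velocity_mulVec_add {c : ℝ → Fin n → ℝ} {s : ℝ} (hc : DifferentiableAt ℝ c s)
    (Λ : Matrix (Fin n) (Fin n) ℝ) (C : Fin n → ℝ) :
    velocity (fun t => Λ *ᵥ c t + C) s = Λ *ᵥ velocity c s := by
  ext ν
  simp only [velocity, Pi.add_apply, mulVec, dotProduct]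
  rw [deriv_add_const]
  exact (HasDerivAt.fun_sum fun k _ =>
    ((differentiableAt_pi.1 hc k).hasDerivAt.const_mul (Λ ν k))).deriv

theorem velocity_mulVec {c : ℝ → Fin n → ℝ} {s : ℝ} (hc : DifferentiableAt ℝ c s)
    (Λ : Matrix (Fin n) (Fin n) ℝ) : velocity (fun t => Λ *ᵥ c t) s = Λ *ᵥ velocity c s := by
  simpa using velocity_mulVec_add hc Λ 0

theorem deltaOp_eq_contract (Γ : (Fin n → ℝ) → Fin n → Fin n → Fin n → ℝ)
    (X ξ : ℝ → Fin n → ℝ) (s : ℝ) :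
    (fun μ => deltaOp Γ X ξ μ s) =
      contract (Γ (X s)) (velocity ξ s) (velocity ξ s)
        + (2 : ℝ) • contract (fderivTensor Γ (X s) (ξ s)) (velocity X s) (velocity ξ s)
        + contract (fderivTensor Γ (X s) (ξ s)) (velocity ξ s) (velocity ξ s) := by
  ext μ
  simp only [deltaOp, contract, fderivTensor, velocity, Pi.add_apply, Pi.smul_apply, smul_eq_mul,
    fderiv_apply_eq_sum_pd, Finset.sum_mul]

end ConnCoeff

open ConnCoeff in
theorem affine_transform_deltaOp_tensorial_general
    {n : ℕ} (U : Set (Fin n → ℝ)) (hU : IsOpen U)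
    (Γ : (Fin n → ℝ) → Fin n → Fin n → Fin n → ℝ) (hΓ : IsConnCoeff U Γ)
    (I : Set ℝ) (hIopen : IsOpen I)
    (X : ℝ → Fin n → ℝ) (hXU : ∀ s ∈ I, X s ∈ U) (hXsm : ContDiffOn ℝ ∞ X I)
    (Λ : Matrix (Fin n) (Fin n) ℝ) (hΛ : IsUnit Λ) (C : Fin n → ℝ)
    (Γt : (Fin n → ℝ) → Fin n → Fin n → Fin n → ℝ)
    (hΓt : TransformedConn U (fun x => Λ.mulVec x + C) Γ Γt) :
    ∀ (ξ : ℝ → Fin n → ℝ), ContDiffOn ℝ ∞ ξ I → ∀ s ∈ I, ∀ μ : Fin n,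
      deltaOp Γt (fun t => Λ.mulVec (X t) + C) (fun t => Λ.mulVec (ξ t)) μ s
        = ∑ ν, Λ μ ν * deltaOp Γ X ξ ν s := by
  intro ξ hξ s hs μ
  have hXs : X s ∈ U := hXU s hs
  have hXd : DifferentiableAt ℝ X s :=
    (hXsm.contDiffAt (hIopen.mem_nhds hs)).differentiableAt (by simp)
  have hξd : DifferentiableAt ℝ ξ s :=
    (hξ.contDiffAt (hIopen.mem_nhds hs)).differentiableAt (by simp)
  have hΓd : ∀ ρ ν σ, DifferentiableAt ℝ (fun x => Γ x ρ ν σ) (X s) := fun ρ ν σ =>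
    ((hΓ.1 ρ ν σ).contDiffAt (hU.mem_nhds hXs)).differentiableAt (by simp)
  have hpush₀ := hΓt.isPushforward_of_affine hXs
  have hpush₁ : IsPushforward Λ (fderivTensor Γ (X s) (ξ s))
      (fderivTensor Γt (Λ *ᵥ X s + C) (Λ *ᵥ ξ s)) := by
    rw [← fderivTensor_comp_mulVec_add hΛ]
    exact IsPushforward.fderivTensor_of_eventually hΛ
      (eventually_of_mem (hU.mem_nhds hXs) fun _ hx => hΓt.isPushforward_of_affine hx) hΓd _
  have key : (fun μ => deltaOp Γt (fun t => Λ *ᵥ X t + C) (fun t => Λ *ᵥ ξ t) μ s)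
      = Λ *ᵥ fun ν => deltaOp Γ X ξ ν s := by
    rw [deltaOp_eq_contract, deltaOp_eq_contract, velocity_mulVec_add hXd, velocity_mulVec hξd,
      hpush₀.contract_mulVec, hpush₁.contract_mulVec, hpush₁.contract_mulVec, mulVec_add,
      mulVec_add, mulVec_smul]
  exact congrFun key μ

/-- Under an invertible affine coordinate change `φ x = Λ x + C`, the
quadratic remainder operator transforms tensorially: `Δ̃^μ[Λξ](s) = Λ^μ_ν Δ^ν[ξ](s)`. -/
theorem affine_transform_deltaOp_tensorial
    {n : ℕ} (hn : 2 ≤ n) (U : Set (Fin n → ℝ)) (hU : IsOpen U)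
    (Γ : (Fin n → ℝ) → Fin n → Fin n → Fin n → ℝ) (hΓ : IsConnCoeff U Γ)
    (I : Set ℝ) (hIopen : IsOpen I) (hIint : I.OrdConnected)
    (X : ℝ → Fin n → ℝ) (hXU : ∀ s ∈ I, X s ∈ U) (hXsm : ContDiffOn ℝ ∞ X I)
    (Λ : Matrix (Fin n) (Fin n) ℝ) (hΛ : IsUnit Λ) (C : Fin n → ℝ)
    (Γt : (Fin n → ℝ) → Fin n → Fin n → Fin n → ℝ)
    (hΓt : TransformedConn U (fun x => Λ.mulVec x + C) Γ Γt) :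
    ∀ (ξ : ℝ → Fin n → ℝ), ContDiffOn ℝ ∞ ξ I → ∀ s ∈ I, ∀ μ : Fin n,
      deltaOp Γt (fun t => Λ.mulVec (X t) + C) (fun t => Λ.mulVec (ξ t)) μ s
        = ∑ ν, Λ μ ν * deltaOp Γ X ξ ν s :=
  affine_transform_deltaOp_tensorial_general U hU Γ hΓ I hIopen X hXU hXsm Λ hΛ C Γt hΓt
end
end

section
/- Let n ≥ 3, let Γ be smooth torsion-free connection coefficients on an open set U ⊆ ℝⁿ, let X : I → U be a geodesic, and let s₀ ∈ I. Then there exist an open subinterval I' ⊆ I containing s₀, a smooth map ξ : I' → ℝⁿ which is a generalized Jacobi field along X restricted to I' with respect to Γ, and a smooth diffeomorphism φ from an open neighborhood V ⊆ U of X(I') onto an open subset of ℝⁿ, such that the tensorially transformed map ξ̃(s) := Dφ(X(s)) ξ(s) is NOT a generalized Jacobi field along φ∘X with respect to the transformed connection coefficients Γ̃. -/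
open Set ContDiff

noncomputable section

/-!
At an instant where `ξ` vanishes, the transformed generalized Jacobi operator of
`ξ̃ = Dφ(X) ξ` is `Dφ` applied to the original operator minus the Hessian term `∂²φ(ξ̇, ξ̇)`:
the transformation law turns the `Γ̃`-terms into `Dφ Γ(ξ̇, 2Ẋ + ξ̇) - ∂²φ(ξ̇, 2Ẋ + ξ̇)`, while the
second derivative of `ξ̃` only contributes `Dφ ξ̈ + 2 ∂²φ(Ẋ, ξ̇)`. It therefore suffices to find a
generalized Jacobi field vanishing at some `s₁` with `ξ̇^κ(s₁) ≠ 0`, and to take the shear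
`φ(x) = x + x_κ² e_κ'`, whose Hessian term is `2 (ξ̇^κ)²`. If the geodesic moves, `ξ = X(s₁) - X`
works, because `X + ξ` is constant; if it is constant, the generalized Jacobi equation is an
autonomous ODE, solved with `ξ(s₀) = 0` and `ξ̇(s₀) = e₀`.
-/

open Matrix Filter Topology

variable {n : ℕ}

theorem contDiff_pd {m : WithTop ℕ∞} {f : (Fin n → ℝ) → ℝ} (hf : ContDiff ℝ (m + 1) f)
    (μ : Fin n) : ContDiff ℝ m (pd μ f) :=
  (hf.fderiv_right le_rfl).clm_apply contDiff_const

theorem pd_pd_comm {f : (Fin n → ℝ) → ℝ} {x : Fin n → ℝ} (hf : ContDiffAt ℝ 2 f x)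
    (ν σ : Fin n) : pd ν (pd σ f) x = pd σ (pd ν f) x := by
  have hd : DifferentiableAt ℝ (fderiv ℝ f) x :=
    (hf.fderiv_right (m := 1) le_rfl).differentiableAt one_ne_zero
  have key : ∀ a b : Fin n, pd a (pd b f) x
      = fderiv ℝ (fderiv ℝ f) x (Pi.single a 1) (Pi.single b 1) := by
    intro a b
    change fderiv ℝ (fun y => fderiv ℝ f y (Pi.single b 1)) x (Pi.single a 1) = _
    rw [fderiv_clm_apply hd (differentiableAt_const _)]
    simp
  rw [key, key, hf.isSymmSndFDerivAt (by simp)]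

theorem fderiv_apply_eq_sum_pd (g : (Fin n → ℝ) → ℝ) (x v : Fin n → ℝ) :
    fderiv ℝ g x v = ∑ σ, pd σ g x * v σ := by
  conv_lhs => rw [← Finset.univ_sum_single v]
  refine (map_sum _ _ _).trans (Finset.sum_congr rfl fun σ _ => ?_)
  rw [pd, show Pi.single σ (v σ) = v σ • (Pi.single σ 1 : Fin n → ℝ) by simp [← Pi.single_smul],
    map_smul, smul_eq_mul, mul_comm]

theorem hasDerivAt_comp_of_hasDerivAt_apply {g : (Fin n → ℝ) → ℝ} {X : ℝ → Fin n → ℝ}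
    {v : Fin n → ℝ} {t : ℝ} (hg : DifferentiableAt ℝ g (X t))
    (hX : ∀ σ, HasDerivAt (fun s => X s σ) (v σ) t) :
    HasDerivAt (fun s => g (X s)) (∑ σ, pd σ g (X t) * v σ) t := by
  rw [← fderiv_apply_eq_sum_pd]
  exact hg.hasFDerivAt.comp_hasDerivAt t (hasDerivAt_pi.mpr hX)

theorem ContDiffOn.hasDerivAt_apply_deriv {f : ℝ → Fin n → ℝ} {J : Set ℝ}
    (hf : ContDiffOn ℝ 2 f J) (hJ : IsOpen J) {t : ℝ} (ht : t ∈ J) (σ : Fin n) :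
    HasDerivAt (fun s => f s σ) (deriv (fun s => f s σ) t) t ∧
      HasDerivAt (deriv fun s => f s σ) (deriv (deriv fun s => f s σ) t) t := by
  have h := (contDiffOn_pi.mp hf σ)
  rw [show (2 : WithTop ℕ∞) = 1 + 1 from rfl, contDiffOn_succ_iff_deriv_of_isOpen hJ] at h
  exact ⟨(h.1.differentiableAt (hJ.mem_nhds ht)).hasDerivAt,
    ((h.2.2.differentiableOn one_ne_zero).differentiableAt (hJ.mem_nhds ht)).hasDerivAt⟩

def jacobian (φ : (Fin n → ℝ) → Fin n → ℝ) (x : Fin n → ℝ) : Matrix (Fin n) (Fin n) ℝ :=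
  Matrix.of fun i j => pd j (fun y => φ y i) x

theorem jacobian_eq_toMatrix' {φ : (Fin n → ℝ) → Fin n → ℝ} {x : Fin n → ℝ}
    (hφ : DifferentiableAt ℝ φ x) :
    jacobian φ x = LinearMap.toMatrix' (fderiv ℝ φ x : (Fin n → ℝ) →ₗ[ℝ] Fin n → ℝ) := by
  ext i j
  rw [LinearMap.toMatrix'_apply, jacobian, of_apply, pd,
    (hasFDerivAt_pi'.mp hφ.hasFDerivAt i).fderiv]
  rfl

theorem jacobian_mul_jacobian_eq_one {φ ψ : (Fin n → ℝ) → Fin n → ℝ} {V : Set (Fin n → ℝ)}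
    {x : Fin n → ℝ} (hV : IsOpen V) (hx : x ∈ V) (hψφ : ∀ y ∈ V, ψ (φ y) = y)
    (hφ : DifferentiableAt ℝ φ x) (hψ : DifferentiableAt ℝ ψ (φ x)) :
    jacobian ψ (φ x) * jacobian φ x = 1 := by
  have hcomp : (fderiv ℝ ψ (φ x)).comp (fderiv ℝ φ x) = ContinuousLinearMap.id ℝ _ :=
    (hψ.hasFDerivAt.comp x hφ.hasFDerivAt).unique <| (hasFDerivAt_id x).congr_of_eventuallyEq <|
      Filter.eventually_of_mem (hV.mem_nhds hx) hψφ
  rw [jacobian_eq_toMatrix' hψ, jacobian_eq_toMatrix' hφ, ← LinearMap.toMatrix'_comp,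
    ← ContinuousLinearMap.toLinearMap_comp, hcomp, ContinuousLinearMap.coe_id,
    LinearMap.toMatrix'_id]

theorem sum_sum_mul_mul_eq_transpose_mul_mul (G A : Matrix (Fin n) (Fin n) ℝ) (ν σ : Fin n) :
    ∑ α, ∑ β, G α β * A α ν * A β σ = (Aᵀ * G * A) ν σ := by
  simp only [mul_apply, transpose_apply, Finset.sum_mul]
  rw [Finset.sum_comm]
  exact Finset.sum_congr rfl fun _ _ => Finset.sum_congr rfl fun _ _ => by ring

def connPushforward (φ : (Fin n → ℝ) → Fin n → ℝ) (Γ : (Fin n → ℝ) → Fin n → Fin n → Fin n → ℝ)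
    (x : Fin n → ℝ) (lam : Fin n) : Matrix (Fin n) (Fin n) ℝ :=
  Matrix.of fun ν σ => ∑ α, pd α (fun y => φ y lam) x * Γ x α ν σ
    - pd ν (fun y => pd σ (fun z => φ z lam) y) x

theorem transformedConn_iff {V : Set (Fin n → ℝ)} {φ : (Fin n → ℝ) → Fin n → ℝ}
    {Γ Γt : (Fin n → ℝ) → Fin n → Fin n → Fin n → ℝ} :
    TransformedConn V φ Γ Γt ↔ ∀ x ∈ V, ∀ lam,
      (jacobian φ x)ᵀ * Matrix.of (Γt (φ x) lam) * jacobian φ x = connPushforward φ Γ x lam := by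
  simp only [TransformedConn, ← Matrix.ext_iff, connPushforward, of_apply, eq_sub_iff_add_eq,
    ← sum_sum_mul_mul_eq_transpose_mul_mul, jacobian]
  exact forall₂_congr fun x _ => forall_congr' fun lam => forall₂_congr fun ν σ => eq_comm

theorem IsDiffeoOn.exists_transformedConn {V : Set (Fin n → ℝ)} {φ : (Fin n → ℝ) → Fin n → ℝ}
    (hV : IsOpen V) (hφ : IsDiffeoOn φ V) (Γ : (Fin n → ℝ) → Fin n → Fin n → Fin n → ℝ) :
    ∃ Γt, TransformedConn V φ Γ Γt := by
  obtain ⟨hφd, hW, ψ, hψd, hψφ, -⟩ := hφ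
  refine ⟨fun y lam => (jacobian ψ y)ᵀ * connPushforward φ Γ (ψ y) lam * jacobian ψ y,
    transformedConn_iff.mpr fun x hx lam => ?_⟩
  have hBA := jacobian_mul_jacobian_eq_one hV hx hψφ
    ((hφd.differentiableOn (by simp)).differentiableAt (hV.mem_nhds hx))
    ((hψd.differentiableOn (by simp)).differentiableAt (hW.mem_nhds (mem_image_of_mem φ hx)))
  change (jacobian φ x)ᵀ * ((jacobian ψ (φ x))ᵀ * connPushforward φ Γ (ψ (φ x)) lam
    * jacobian ψ (φ x)) * jacobian φ x = _
  rw [hψφ x hx]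
  simp only [Matrix.mul_assoc, hBA, Matrix.mul_one]
  rw [← Matrix.mul_assoc, ← transpose_mul, hBA, transpose_one, Matrix.one_mul]

theorem sum_sum_mul_mulVec_eq_transpose_mul_mul (G A : Matrix (Fin n) (Fin n) ℝ)
    (a b : Fin n → ℝ) :
    ∑ α, ∑ β, G α β * (A *ᵥ a) α * (A *ᵥ b) β = ∑ ν, ∑ σ, (Aᵀ * G * A) ν σ * a ν * b σ := by
  have key : ∀ (M : Matrix (Fin n) (Fin n) ℝ) (x y : Fin n → ℝ),
      ∑ α, ∑ β, M α β * x α * y β = x ⬝ᵥ (M *ᵥ y) := by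
    intro M x y
    simp only [dotProduct, mulVec, Finset.mul_sum]
    exact Finset.sum_congr rfl fun _ _ => Finset.sum_congr rfl fun _ _ => by ring
  rw [key, key, mulVec_mulVec, dotProduct_mulVec, dotProduct_mulVec, ← vecMul_transpose,
    vecMul_vecMul, Matrix.mul_assoc]

theorem TransformedConn.sum_sum_mul_mulVec_mul_mulVec {V : Set (Fin n → ℝ)}
    {φ : (Fin n → ℝ) → Fin n → ℝ} {Γ Γt : (Fin n → ℝ) → Fin n → Fin n → Fin n → ℝ}
    (h : TransformedConn V φ Γ Γt) {x : Fin n → ℝ} (hx : x ∈ V) (lam : Fin n) (a b : Fin n → ℝ) :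
    ∑ α, ∑ β, Γt (φ x) lam α β * (jacobian φ x *ᵥ a) α * (jacobian φ x *ᵥ b) β
      = ∑ α, pd α (fun y => φ y lam) x * ∑ ν, ∑ σ, Γ x α ν σ * a ν * b σ
        - ∑ ν, ∑ σ, pd ν (fun y => pd σ (fun z => φ z lam) y) x * a ν * b σ := by
  have hK :=
    sum_sum_mul_mulVec_eq_transpose_mul_mul (Matrix.of (Γt (φ x) lam)) (jacobian φ x) a b
  rw [transformedConn_iff.mp h x hx lam] at hK
  simp only [of_apply] at hK
  rw [hK, connPushforward]
  simp only [of_apply, sub_mul, Finset.sum_sub_distrib, Finset.sum_mul, Finset.mul_sum]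
  congr 1
  symm
  rw [Finset.sum_comm]
  refine Finset.sum_congr rfl fun ν _ => ?_
  rw [Finset.sum_comm]
  exact Finset.sum_congr rfl fun σ _ => Finset.sum_congr rfl fun α _ => by ring

def pushforward (φ : (Fin n → ℝ) → Fin n → ℝ) (X ξ : ℝ → Fin n → ℝ) (s : ℝ) : Fin n → ℝ :=
  jacobian φ (X s) *ᵥ ξ s

section Pushforward

variable {φ : (Fin n → ℝ) → Fin n → ℝ} {X ξ : ℝ → Fin n → ℝ}

theorem hasDerivAt_pushforward_apply {v w : Fin n → ℝ} {t : ℝ} {μ : Fin n}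
    (hφ : ∀ ν, DifferentiableAt ℝ (pd ν (fun y => φ y μ)) (X t))
    (hX : ∀ σ, HasDerivAt (fun s => X s σ) (v σ) t)
    (hξ : ∀ ν, HasDerivAt (fun s => ξ s ν) (w ν) t) :
    HasDerivAt (fun s => pushforward φ X ξ s μ)
      (∑ ν, ((∑ σ, pd σ (pd ν (fun y => φ y μ)) (X t) * v σ) * ξ t ν
        + pd ν (fun y => φ y μ) (X t) * w ν)) t :=
  HasDerivAt.fun_sum (u := Finset.univ) fun ν _ =>
    (hasDerivAt_comp_of_hasDerivAt_apply (hφ ν) hX).mul (hξ ν)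

variable {J : Set ℝ} {s₀ : ℝ}

theorem deriv_pushforward_apply_of_eq_zero (hφ : ContDiff ℝ 2 φ)
    (hX : ∀ σ, DifferentiableAt ℝ (fun t => X t σ) s₀)
    (hξ : ∀ ν, DifferentiableAt ℝ (fun t => ξ t ν) s₀) (hξ₀ : ξ s₀ = 0) (μ : Fin n) :
    deriv (fun t => pushforward φ X ξ t μ) s₀
      = (jacobian φ (X s₀) *ᵥ fun ν => deriv (fun t => ξ t ν) s₀) μ := by
  rw [(hasDerivAt_pushforward_apply
    (fun ν => (contDiff_pd (contDiff_pi.mp hφ μ) ν).differentiable one_ne_zero _)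
    (fun σ => (hX σ).hasDerivAt) (fun ν => (hξ ν).hasDerivAt)).deriv]
  simp [hξ₀, mulVec, dotProduct, jacobian]

theorem deriv_deriv_pushforward_apply_of_eq_zero (hφ : ContDiff ℝ 3 φ) (hJ : IsOpen J)
    (hX : ContDiffOn ℝ 2 X J) (hξ : ContDiffOn ℝ 2 ξ J) (hs₀ : s₀ ∈ J) (hξ₀ : ξ s₀ = 0)
    (μ : Fin n) :
    deriv (deriv fun t => pushforward φ X ξ t μ) s₀
      = 2 * ∑ ν, ∑ σ, pd ν (fun y => pd σ (fun z => φ z μ) y) (X s₀)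
          * deriv (fun t => ξ t ν) s₀ * deriv (fun t => X t σ) s₀
        + ∑ ν, pd ν (fun y => φ y μ) (X s₀) * deriv (deriv fun t => ξ t ν) s₀ := by
  have hpd : ∀ ν, ContDiff ℝ 2 (pd ν (fun y => φ y μ)) :=
    fun ν => contDiff_pd (contDiff_pi.mp hφ μ) ν
  have hX' := fun t (ht : t ∈ J) σ => hX.hasDerivAt_apply_deriv hJ ht σ
  have hξ' := fun t (ht : t ∈ J) ν => hξ.hasDerivAt_apply_deriv hJ ht ν
  have hev : deriv (fun t => pushforward φ X ξ t μ) =ᶠ[𝓝 s₀] fun t =>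
      ∑ ν, ((∑ σ, pd σ (pd ν (fun y => φ y μ)) (X t) * deriv (fun t => X t σ) t) * ξ t ν
        + pd ν (fun y => φ y μ) (X t) * deriv (fun t => ξ t ν) t) :=
    Filter.eventually_of_mem (hJ.mem_nhds hs₀) fun t ht =>
      (hasDerivAt_pushforward_apply (fun ν => (hpd ν).differentiable two_ne_zero _)
        (fun σ => (hX' t ht σ).1) (fun ν => (hξ' t ht ν).1)).deriv
  have hdjac := fun ν => HasDerivAt.fun_sum fun σ (_ : σ ∈ Finset.univ) =>
    (hasDerivAt_comp_of_hasDerivAt_apply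
      ((contDiff_pd (hpd ν) σ).differentiable one_ne_zero (X s₀))
      fun τ => (hX' s₀ hs₀ τ).1).mul (hX' s₀ hs₀ σ).2
  have hsum := HasDerivAt.fun_sum fun ν (_ : ν ∈ Finset.univ) =>
    ((hdjac ν).mul (hξ' s₀ hs₀ ν).1).add
      ((hasDerivAt_comp_of_hasDerivAt_apply ((hpd ν).differentiable two_ne_zero (X s₀))
        fun σ => (hX' s₀ hs₀ σ).1).mul (hξ' s₀ hs₀ ν).2)
  have hsymm : ∀ ν, (∑ σ, pd σ (pd ν (fun y => φ y μ)) (X s₀) * deriv (fun t => X t σ) s₀)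
        * deriv (fun t => ξ t ν) s₀
      = ∑ σ, pd ν (fun y => pd σ (fun z => φ z μ) y) (X s₀)
          * deriv (fun t => ξ t ν) s₀ * deriv (fun t => X t σ) s₀ := fun ν => by
    rw [Finset.sum_mul]
    refine Finset.sum_congr rfl fun σ _ => ?_
    rw [pd_pd_comm ((contDiff_pi.mp hφ μ).contDiffAt.of_le (by norm_num)) σ ν]
    ring
  rw [hev.deriv_eq]
  refine hsum.deriv.trans ?_
  simp only [hξ₀, Pi.zero_apply, Pi.mul_apply, mul_zero, zero_add, hsymm]
  rw [Finset.mul_sum, ← Finset.sum_add_distrib]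
  exact Finset.sum_congr rfl fun _ _ => by ring

end Pushforward

theorem genJacobiOp_of_eq_zero {Γ : (Fin n → ℝ) → Fin n → Fin n → Fin n → ℝ}
    {X ξ : ℝ → Fin n → ℝ} {s : ℝ} (hξ : ξ s = 0) (μ : Fin n) :
    genJacobiOp Γ X ξ μ s = deriv (deriv fun t => ξ t μ) s
      + (2 * ∑ ν, ∑ σ, Γ (X s) μ ν σ * deriv (fun t => ξ t ν) s * deriv (fun t => X t σ) s
        + ∑ ν, ∑ σ, Γ (X s) μ ν σ * deriv (fun t => ξ t ν) s * deriv (fun t => ξ t σ) s) := by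
  simp only [genJacobiOp, hξ, Pi.zero_apply, mul_zero, zero_mul, Finset.sum_const_zero, add_zero,
    Finset.mul_sum, ← Finset.sum_add_distrib]
  exact congrArg _ (Finset.sum_congr rfl fun _ _ => Finset.sum_congr rfl fun _ _ => by ring)

theorem genJacobiOp_pushforward_of_eq_zero {φ : (Fin n → ℝ) → Fin n → ℝ} (hφ : ContDiff ℝ 3 φ)
    {V : Set (Fin n → ℝ)} {Γ Γt : (Fin n → ℝ) → Fin n → Fin n → Fin n → ℝ}
    (hΓt : TransformedConn V φ Γ Γt) {J : Set ℝ} (hJ : IsOpen J) {X ξ : ℝ → Fin n → ℝ}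
    (hX : ContDiffOn ℝ 2 X J) (hξ : ContDiffOn ℝ 2 ξ J) {s₀ : ℝ} (hs₀ : s₀ ∈ J)
    (hXV : X s₀ ∈ V) (hξ₀ : ξ s₀ = 0) (lam : Fin n) :
    genJacobiOp Γt (fun s => φ (X s)) (pushforward φ X ξ) lam s₀
      = ∑ α, pd α (fun y => φ y lam) (X s₀) * genJacobiOp Γ X ξ α s₀
        - ∑ ν, ∑ σ, pd ν (fun y => pd σ (fun z => φ z lam) y) (X s₀)
            * deriv (fun t => ξ t ν) s₀ * deriv (fun t => ξ t σ) s₀ := by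
  have hX' := fun σ => (hX.hasDerivAt_apply_deriv hJ hs₀ σ).1
  have hξ' := fun ν => (hξ.hasDerivAt_apply_deriv hJ hs₀ ν).1
  have hY : ∀ μ, deriv (fun t => φ (X t) μ) s₀
      = (jacobian φ (X s₀) *ᵥ fun σ => deriv (fun t => X t σ) s₀) μ := fun μ =>
    (hasDerivAt_comp_of_hasDerivAt_apply
      ((contDiff_pi.mp hφ μ).differentiable (by norm_num) _) hX').deriv
  have hη₀ : pushforward φ X ξ s₀ = 0 := by simp [pushforward, hξ₀]
  have hdistrib : ∀ a b c d : Fin n → ℝ, ∑ α, a α * (b α + (2 * c α + d α))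
      = ∑ α, a α * b α + 2 * ∑ α, a α * c α + ∑ α, a α * d α := fun a b c d => by
    simp only [mul_add, Finset.sum_add_distrib, Finset.mul_sum, mul_left_comm _ (2 : ℝ), add_assoc]
  simp only [genJacobiOp_of_eq_zero hξ₀, genJacobiOp_of_eq_zero hη₀, hY,
    deriv_pushforward_apply_of_eq_zero (hφ.of_le (by norm_num)) (fun σ => (hX' σ).differentiableAt)
      (fun ν => (hξ' ν).differentiableAt) hξ₀]
  rw [hΓt.sum_sum_mul_mulVec_mul_mulVec hXV, hΓt.sum_sum_mul_mulVec_mul_mulVec hXV,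
    deriv_deriv_pushforward_apply_of_eq_zero hφ hJ hX hξ hs₀ hξ₀, hdistrib]
  ring

theorem exists_contDiffOn_forall_hasDerivAt {E : Type*} [NormedAddCommGroup E] [NormedSpace ℝ E]
    [CompleteSpace E] {F : E → E} (hF : ContDiff ℝ ∞ F) (t₀ : ℝ) (x₀ : E) :
    ∃ ε > (0 : ℝ), ∃ α : ℝ → E, α t₀ = x₀ ∧ ContDiffOn ℝ ∞ α (Ioo (t₀ - ε) (t₀ + ε)) ∧
      ∀ t ∈ Ioo (t₀ - ε) (t₀ + ε), HasDerivAt α (F (α t)) t := by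
  obtain ⟨α, hα₀, ε, hε, hα⟩ :=
    (hF.contDiffAt (x := x₀)).of_le (by simp)
      |>.exists_forall_mem_closedBall_exists_eq_forall_mem_Ioo_hasDerivAt₀ t₀
  refine ⟨ε, hε, α, hα₀, contDiffOn_infty.mpr fun k => ?_, hα⟩
  -- bootstrap: `α' = F ∘ α` is as smooth as `α`
  induction k with
  | zero => exact contDiffOn_zero.mpr fun t ht => (hα t ht).continuousAt.continuousWithinAt
  | succ k ih =>
    rw [Nat.cast_succ, contDiffOn_succ_iff_deriv_of_isOpen isOpen_Ioo]
    refine ⟨fun t ht => (hα t ht).differentiableAt.differentiableWithinAt, by simp, ?_⟩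
    exact ((hF.of_le (mod_cast le_top)).comp_contDiffOn ih).congr fun t ht => (hα t ht).deriv

theorem IsGeodesic.isGenJacobiField_const_sub {Γ : (Fin n → ℝ) → Fin n → Fin n → Fin n → ℝ}
    {I : Set ℝ} {X : ℝ → Fin n → ℝ} (hX : IsGeodesic Γ I X) (a : Fin n → ℝ) :
    IsGenJacobiField Γ I X (fun s μ => a μ - X s μ) := by
  intro s hs μ
  have hd : ∀ ν, deriv (fun t => a ν - X t ν) = fun t => -deriv (fun t => X t ν) t :=
    fun ν => funext fun t => deriv_const_sub _
  have hmid : ∑ ν, ∑ σ, Γ (X s) μ ν σ * (2 * -deriv (fun t => X t ν) s * deriv (fun t => X t σ) s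
        + -deriv (fun t => X t ν) s * -deriv (fun t => X t σ) s)
      = -∑ ν, ∑ σ, Γ (X s) μ ν σ * deriv (fun t => X t ν) s * deriv (fun t => X t σ) s := by
    simp only [← Finset.sum_neg_distrib]
    exact Finset.sum_congr rfl fun _ _ => Finset.sum_congr rfl fun _ _ => by ring
  simp only [genJacobiOp, hd, deriv.fun_neg, add_neg_cancel, mul_zero, Finset.sum_const_zero,
    add_zero, hmid]
  linarith [hX s hs μ]

theorem exists_genJacobiField_of_eqOn_const {Γ : (Fin n → ℝ) → Fin n → Fin n → Fin n → ℝ}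
    {I : Set ℝ} (hI : IsOpen I) (hIc : I.OrdConnected) {X : ℝ → Fin n → ℝ} {p : Fin n → ℝ}
    (hXp : ∀ s ∈ I, X s = p) {s₀ : ℝ} (hs₀ : s₀ ∈ I) (w : Fin n → ℝ) :
    ∃ I' ⊆ I, IsOpen I' ∧ I'.OrdConnected ∧ s₀ ∈ I' ∧
      ∃ ξ : ℝ → Fin n → ℝ, ContDiffOn ℝ ∞ ξ I' ∧ IsGenJacobiField Γ I' X ξ ∧
        ξ s₀ = 0 ∧ ∀ ν, deriv (fun t => ξ t ν) s₀ = w ν := by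
  set accel : (Fin n → ℝ) → (Fin n → ℝ) → Fin n → ℝ := fun u v μ =>
    -∑ ν, ∑ σ, (Γ p μ ν σ + ∑ α, pd α (fun x => Γ x μ ν σ) p * u α) * v ν * v σ
  have hF : ContDiff ℝ ∞ fun P : (Fin n → ℝ) × (Fin n → ℝ) => (P.2, accel P.1 P.2) := by
    simp only [accel]
    fun_prop
  obtain ⟨ε, hε, f, hf₀, hfsm, hf⟩ := exists_contDiffOn_forall_hasDerivAt hF s₀ (0, w)
  set I' := Ioo (s₀ - ε) (s₀ + ε) ∩ I
  have hI' : IsOpen I' := isOpen_Ioo.inter hI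
  have hcoord : ∀ s ∈ I', ∀ μ, HasDerivAt (fun t => (f t).1 μ) ((f s).2 μ) s ∧
      HasDerivAt (fun t => (f t).2 μ) (accel (f s).1 (f s).2 μ) s := fun s hs μ =>
    ⟨(((ContinuousLinearMap.proj μ : (Fin n → ℝ) →L[ℝ] ℝ).comp
        (ContinuousLinearMap.fst ℝ (Fin n → ℝ) (Fin n → ℝ))).hasFDerivAt.comp_hasDerivAt s
          (hf s hs.1)),
      (((ContinuousLinearMap.proj μ : (Fin n → ℝ) →L[ℝ] ℝ).comp
        (ContinuousLinearMap.snd ℝ (Fin n → ℝ) (Fin n → ℝ))).hasFDerivAt.comp_hasDerivAt s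
          (hf s hs.1))⟩
  have hvel : ∀ s ∈ I', ∀ μ, deriv (fun t => (f t).1 μ) =ᶠ[𝓝 s] fun t => (f t).2 μ :=
    fun s hs μ => Filter.eventually_of_mem (hI'.mem_nhds hs) fun t ht => (hcoord t ht μ).1.deriv
  refine ⟨I', inter_subset_right, hI', ordConnected_Ioo.inter hIc,
    ⟨⟨by linarith, by linarith⟩, hs₀⟩,
    fun s => (f s).1, hfsm.fst.mono inter_subset_left, fun s hs μ => ?_, by simp [hf₀], fun ν => by
      simp [(hcoord s₀ ⟨⟨by linarith, by linarith⟩, hs₀⟩ ν).1.deriv, hf₀]⟩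
  have hX' : ∀ ν, deriv (fun t => X t ν) s = 0 := fun ν => by
    have hloc : (fun t => X t ν) =ᶠ[𝓝 s] fun _ => p ν :=
      Filter.eventually_of_mem (hI.mem_nhds hs.2) fun t ht => congrFun (hXp t ht) ν
    rw [hloc.deriv_eq, deriv_const]
  have hacc : ∑ ν, ∑ σ, (Γ p μ ν σ + ∑ α, pd α (fun x => Γ x μ ν σ) p * (f s).1 α)
        * (f s).2 ν * (f s).2 σ
      = ∑ ν, ∑ σ, Γ p μ ν σ * (f s).2 ν * (f s).2 σ
        + ∑ ν, ∑ σ, ∑ α, pd α (fun x => Γ x μ ν σ) p * (f s).1 α * (f s).2 ν * (f s).2 σ := by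
    simp only [add_mul, Finset.sum_mul, Finset.sum_add_distrib]
  simp only [genJacobiOp, hX', (hvel s hs _).deriv_eq, (hcoord s hs _).2.deriv,
    (hcoord s hs _).1.deriv,
    hXp s hs.2, accel, hacc, mul_zero, zero_add, ← mul_assoc]
  ring

def shear (κ κ' : Fin n) (x : Fin n → ℝ) : Fin n → ℝ := x + Pi.single κ' (x κ ^ 2)

theorem contDiff_shear (κ κ' : Fin n) : ContDiff ℝ ∞ (shear κ κ') :=
  contDiff_id.add ((contDiff_single (𝕜 := ℝ) (F' := fun _ : Fin n => ℝ) ∞ κ').comp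
    ((contDiff_apply ℝ ℝ κ).pow 2))

theorem isDiffeoOn_shear {κ κ' : Fin n} (hκ : κ ≠ κ') {V : Set (Fin n → ℝ)} (hV : IsOpen V) :
    IsDiffeoOn (shear κ κ') V := by
  set ψ : (Fin n → ℝ) → Fin n → ℝ := fun y => y - Pi.single κ' (y κ ^ 2)
  have hψ : ContDiff ℝ ∞ ψ :=
    contDiff_id.sub ((contDiff_single (𝕜 := ℝ) (F' := fun _ : Fin n => ℝ) ∞ κ').comp
      ((contDiff_apply ℝ ℝ κ).pow 2))
  have hψφ : ∀ x, ψ (shear κ κ' x) = x := fun x => by simp [ψ, shear, hκ]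
  have hφψ : ∀ y, shear κ κ' (ψ y) = y := fun y => by simp [ψ, shear, hκ]
  have himage : shear κ κ' '' V = ψ ⁻¹' V :=
    Set.ext fun y => ⟨by rintro ⟨x, hx, rfl⟩; simpa [hψφ] using hx, fun hy => ⟨ψ y, hy, hφψ y⟩⟩
  refine ⟨(contDiff_shear κ κ').contDiffOn, himage ▸ hV.preimage hψ.continuous, ψ, hψ.contDiffOn,
    fun x _ => hψφ x, ?_⟩
  rintro _ ⟨x, hx, rfl⟩
  rwa [hψφ]

theorem sum_pd_pd_shear_mul_mul (κ κ' : Fin n) (x w : Fin n → ℝ) :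
    ∑ ν, ∑ σ, pd ν (fun y => pd σ (fun z => shear κ κ' z κ') y) x * w ν * w σ = 2 * w κ ^ 2 := by
  have hcoord : (fun z => shear κ κ' z κ') = fun z => z κ' + z κ ^ 2 := by
    funext z; simp [shear]
  have hpd : ∀ σ, pd σ (fun z => shear κ κ' z κ')
      = fun y => (Pi.single σ 1 : Fin n → ℝ) κ' + 2 * (Pi.single σ 1 : Fin n → ℝ) κ * y κ := by
    intro σ; funext y
    rw [hcoord, pd, ((hasFDerivAt_apply κ' y).fun_add ((hasFDerivAt_apply κ y).pow 2)).fderiv]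
    simp
    ring
  have hpd2 : ∀ ν σ, pd ν (pd σ (fun z => shear κ κ' z κ')) x
      = 2 * (Pi.single σ 1 : Fin n → ℝ) κ * (Pi.single ν 1 : Fin n → ℝ) κ := by
    intro ν σ
    rw [hpd, pd, (((hasFDerivAt_apply κ x).const_mul _).const_add _).fderiv]
    simp
  simp only [hpd2, Pi.single_apply]
  simp [sq]
  ring

theorem IsGeodesic.exists_genJacobiField_eq_zero_deriv_ne_zero [NeZero n]
    {Γ : (Fin n → ℝ) → Fin n → Fin n → Fin n → ℝ} {I : Set ℝ} (hI : IsOpen I)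
    (hIc : I.OrdConnected) {X : ℝ → Fin n → ℝ} (hXsm : ContDiffOn ℝ ∞ X I)
    (hX : IsGeodesic Γ I X) {s₀ : ℝ} (hs₀ : s₀ ∈ I) :
    ∃ I' ⊆ I, IsOpen I' ∧ I'.OrdConnected ∧ s₀ ∈ I' ∧
      ∃ ξ : ℝ → Fin n → ℝ, ContDiffOn ℝ ∞ ξ I' ∧ IsGenJacobiField Γ I' X ξ ∧
        ∃ s₁ ∈ I', ξ s₁ = 0 ∧ ∃ κ, deriv (fun t => ξ t κ) s₁ ≠ 0 := by
  by_cases hmove : ∃ s₁ ∈ I, ∃ κ, deriv (fun t => X t κ) s₁ ≠ 0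
  · obtain ⟨s₁, hs₁, κ, hκ⟩ := hmove
    refine ⟨I, subset_rfl, hI, hIc, hs₀, fun s μ => X s₁ μ - X s μ, contDiffOn_const.sub hXsm,
      hX.isGenJacobiField_const_sub _, s₁, hs₁, funext fun _ => sub_self _, κ, ?_⟩
    rwa [deriv_const_sub, neg_ne_zero]
  · simp only [not_exists, not_and, not_not] at hmove
    have hconst : ∀ s ∈ I, X s = X s₀ := fun s hs => funext fun μ =>
      hI.is_const_of_deriv_eq_zero hIc.isPreconnected
        ((contDiffOn_pi.mp hXsm μ).differentiableOn (by simp)) (fun t ht => hmove t ht μ) hs hs₀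
    obtain ⟨I', hI'I, hI', hI'c, hs₀', ξ, hξ, hJac, hξ₀, hξ'⟩ :=
      exists_genJacobiField_of_eqOn_const (Γ := Γ) hI hIc hconst hs₀ (Pi.single 0 1)
    exact ⟨I', hI'I, hI', hI'c, hs₀', ξ, hξ, hJac, s₀, hs₀', hξ₀, 0, by simp [hξ']⟩

theorem genJacobi_not_tensorial_general
    {n : ℕ} (hn : 3 ≤ n) (U : Set (Fin n → ℝ)) (hU : IsOpen U)
    (Γ : (Fin n → ℝ) → Fin n → Fin n → Fin n → ℝ)
    (I : Set ℝ) (hIopen : IsOpen I) (hIint : I.OrdConnected)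
    (X : ℝ → Fin n → ℝ) (hXU : ∀ s ∈ I, X s ∈ U) (hXsm : ContDiffOn ℝ ∞ X I)
    (hXgeo : IsGeodesic Γ I X)
    (s₀ : ℝ) (hs₀ : s₀ ∈ I) :
    ∃ I' : Set ℝ, I' ⊆ I ∧ IsOpen I' ∧ I'.OrdConnected ∧ s₀ ∈ I' ∧
    ∃ ξ : ℝ → Fin n → ℝ, ContDiffOn ℝ ∞ ξ I' ∧ IsGenJacobiField Γ I' X ξ ∧
    ∃ V : Set (Fin n → ℝ), V ⊆ U ∧ IsOpen V ∧ (∀ s ∈ I', X s ∈ V) ∧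
    ∃ φ : (Fin n → ℝ) → Fin n → ℝ, IsDiffeoOn φ V ∧
    ∃ Γt : (Fin n → ℝ) → Fin n → Fin n → Fin n → ℝ, TransformedConn V φ Γ Γt ∧
      ¬ IsGenJacobiField Γt I' (fun s => φ (X s))
          (fun s μ => ∑ ν, pd ν (fun y => φ y μ) (X s) * ξ s ν) := by
  have : NeZero n := ⟨by omega⟩
  obtain ⟨I', hI'I, hI', hI'c, hs₀', ξ, hξ, hJac, s₁, hs₁, hξ₀, κ, hκ⟩ :=
    hXgeo.exists_genJacobiField_eq_zero_deriv_ne_zero hIopen hIint hXsm hs₀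
  have : Nontrivial (Fin n) := Fin.nontrivial_iff_two_le.mpr (by omega)
  obtain ⟨κ', hκ'κ⟩ := exists_ne κ
  have hφ := isDiffeoOn_shear hκ'κ.symm hU
  obtain ⟨Γt, hΓt⟩ := hφ.exists_transformedConn hU Γ
  refine ⟨I', hI'I, hI', hI'c, hs₀', ξ, hξ, hJac, U, subset_rfl, hU, fun s hs => hXU s (hI'I hs),
    shear κ κ', hφ, Γt, hΓt, fun hJact => hκ ?_⟩
  have hzero : genJacobiOp Γt (fun s => shear κ κ' (X s)) (pushforward (shear κ κ') X ξ) κ' s₁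
      = 0 := hJact s₁ hs₁ κ'
  rw [genJacobiOp_pushforward_of_eq_zero ((contDiff_shear κ κ').of_le (by norm_cast)) hΓt hI'
      ((hXsm.mono hI'I).of_le (by norm_cast)) (hξ.of_le (by norm_cast)) hs₁ (hXU s₁ (hI'I hs₁)) hξ₀,
    sum_pd_pd_shear_mul_mul] at hzero
  simp only [hJac s₁ hs₁, mul_zero, Finset.sum_const_zero, zero_sub, neg_eq_zero] at hzero
  simpa using hzero

/-- In dimension `n ≥ 3`, along any geodesic one can find (after shrinking
the interval around `s₀`) a generalized Jacobi field `ξ` and a smooth diffeomorphism `φ`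
of a neighborhood of the geodesic such that the tensorially transformed map
`ξ̃ s = Dφ(X s) (ξ s)` is NOT a generalized Jacobi field for the transformed connection
coefficients along `φ ∘ X`. -/
theorem genJacobi_not_tensorial
    {n : ℕ} (hn : 3 ≤ n) (U : Set (Fin n → ℝ)) (hU : IsOpen U)
    (Γ : (Fin n → ℝ) → Fin n → Fin n → Fin n → ℝ) (hΓ : IsConnCoeff U Γ)
    (I : Set ℝ) (hIopen : IsOpen I) (hIint : I.OrdConnected)
    (X : ℝ → Fin n → ℝ) (hXU : ∀ s ∈ I, X s ∈ U) (hXsm : ContDiffOn ℝ ∞ X I)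
    (hXgeo : IsGeodesic Γ I X)
    (s₀ : ℝ) (hs₀ : s₀ ∈ I) :
    ∃ I' : Set ℝ, I' ⊆ I ∧ IsOpen I' ∧ I'.OrdConnected ∧ s₀ ∈ I' ∧
    ∃ ξ : ℝ → Fin n → ℝ, ContDiffOn ℝ ∞ ξ I' ∧ IsGenJacobiField Γ I' X ξ ∧
    ∃ V : Set (Fin n → ℝ), V ⊆ U ∧ IsOpen V ∧ (∀ s ∈ I', X s ∈ V) ∧
    ∃ φ : (Fin n → ℝ) → Fin n → ℝ, IsDiffeoOn φ V ∧
    ∃ Γt : (Fin n → ℝ) → Fin n → Fin n → Fin n → ℝ, TransformedConn V φ Γ Γt ∧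
      ¬ IsGenJacobiField Γt I' (fun s => φ (X s))
          (fun s μ => ∑ ν, pd ν (fun y => φ y μ) (X s) * ξ s ν) :=
  genJacobi_not_tensorial_general hn U hU Γ I hIopen hIint X hXU hXsm hXgeo s₀ hs₀
end
end

section
/- Let Γ be smooth torsion-free connection coefficients on an open set U ⊆ ℝⁿ (n ≥ 2), let X : I → U be a geodesic which is regular (Ẋ(s) ≠ 0 for all s ∈ I), let Ĩ ⊆ ℝ be an open interval, and let ψ : Ĩ → I be a smooth map such that X∘ψ : Ĩ → U is also a regular geodesic. Then ψ is affine: there exist constants A ∈ ℝ \\ {0} and B ∈ ℝ such that ψ(s) = A s + B for all s ∈ Ĩ. -/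
open Set ContDiff

noncomputable section

/-!
Differentiating `X ∘ ψ` twice gives `(X ∘ ψ)'' = ψ'² X''(ψ) + ψ'' X'(ψ)`, and the Christoffel term,
being quadratic in the velocity, picks up the factor `ψ'²`. Subtracting `ψ'²` times the geodesic
equation of `X` at `ψ s` from that of `X ∘ ψ` leaves `ψ'' X'(ψ) = 0`, so regularity of `X` forces
`ψ'' = 0`: `ψ` is affine on the interval, and regularity of `X ∘ ψ` makes its slope nonzero.
-/

section SecondDerivative

variable {E : Type*} [NormedAddCommGroup E] [NormedSpace ℝ E]

theorem deriv_comp_of_contDiffOn {f : ℝ → E} {ψ : ℝ → ℝ} {V W : Set ℝ} (hV : IsOpen V)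
    (hW : IsOpen W) (hf : ContDiffOn ℝ 1 f V) (hψ : ContDiffOn ℝ 1 ψ W) (hψVW : MapsTo ψ W V)
    {s : ℝ} (hs : s ∈ W) :
    deriv (fun t => f (ψ t)) s = deriv ψ s • deriv f (ψ s) :=
  deriv.scomp s ((hf.differentiableOn one_ne_zero).differentiableAt
    (hV.mem_nhds (hψVW hs))) ((hψ.differentiableOn one_ne_zero).differentiableAt (hW.mem_nhds hs))

theorem deriv_deriv_comp_of_contDiffOn {f : ℝ → E} {ψ : ℝ → ℝ} {V W : Set ℝ} (hV : IsOpen V)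
    (hW : IsOpen W) (hf : ContDiffOn ℝ 2 f V) (hψ : ContDiffOn ℝ 2 ψ W) (hψVW : MapsTo ψ W V)
    {s : ℝ} (hs : s ∈ W) :
    deriv (deriv fun t => f (ψ t)) s
      = deriv ψ s ^ 2 • deriv (deriv f) (ψ s) + deriv (deriv ψ) s • deriv f (ψ s) := by
  have hderiv : deriv (fun t => f (ψ t)) =ᶠ[nhds s] fun t => deriv ψ t • deriv f (ψ t) := by
    filter_upwards [hW.mem_nhds hs] with t ht using
      deriv_comp_of_contDiffOn hV hW (hf.of_le one_le_two) (hψ.of_le one_le_two) hψVW ht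
  have hf' : HasDerivAt (deriv f) (deriv (deriv f) (ψ s)) (ψ s) :=
    ((hf.deriv_of_isOpen hV le_rfl).differentiableOn one_ne_zero).differentiableAt
      (hV.mem_nhds (hψVW hs)) |>.hasDerivAt
  have hψ' : HasDerivAt (deriv ψ) (deriv (deriv ψ) s) s :=
    ((hψ.deriv_of_isOpen hW le_rfl).differentiableOn one_ne_zero).differentiableAt
      (hW.mem_nhds hs) |>.hasDerivAt
  have hψ₁ : HasDerivAt ψ (deriv ψ s) s :=
    ((hψ.differentiableOn two_ne_zero).differentiableAt (hW.mem_nhds hs)).hasDerivAt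
  have hcomp : HasDerivAt (fun t => deriv ψ t • deriv f (ψ t))
      (deriv ψ s • deriv ψ s • deriv (deriv f) (ψ s) + deriv (deriv ψ) s • deriv f (ψ s)) s :=
    hψ'.smul (hf'.scomp s hψ₁)
  rw [hderiv.deriv_eq, hcomp.deriv, smul_smul, sq]

end SecondDerivative

section Reparametrization

variable {n : ℕ} {Γ : (Fin n → ℝ) → Fin n → Fin n → Fin n → ℝ} {I It : Set ℝ}
  {X : ℝ → Fin n → ℝ} {ψ : ℝ → ℝ}

theorem IsGeodesic.deriv_mul_deriv_deriv_eq_zero_of_comp (hXgeo : IsGeodesic Γ I X)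
    (hI : IsOpen I) (hX : ContDiffOn ℝ 2 X I) (hIt : IsOpen It) (hψ : ContDiffOn ℝ 2 ψ It)
    (hψIt : MapsTo ψ It I) (hcomp : IsGeodesic Γ It (fun s => X (ψ s))) {s : ℝ} (hs : s ∈ It)
    (μ : Fin n) :
    deriv (fun t => X t μ) (ψ s) * deriv (deriv ψ) s = 0 := by
  have hXν : ∀ ν, ContDiffOn ℝ 2 (fun t => X t ν) I := contDiffOn_pi.mp hX
  have hvel : ∀ ν, deriv (fun t => X (ψ t) ν) s = deriv ψ s * deriv (fun t => X t ν) (ψ s) :=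
    fun ν => deriv_comp_of_contDiffOn hI hIt ((hXν ν).of_le one_le_two) (hψ.of_le one_le_two)
      hψIt hs
  have hacc : deriv (deriv fun t => X (ψ t) μ) s
      = deriv ψ s ^ 2 * deriv (deriv fun t => X t μ) (ψ s)
        + deriv (deriv ψ) s * deriv (fun t => X t μ) (ψ s) :=
    deriv_deriv_comp_of_contDiffOn hI hIt (hXν μ) hψ hψIt hs
  have hquad : ∑ ν, ∑ σ, Γ (X (ψ s)) μ ν σ * deriv (fun t => X (ψ t) ν) s
        * deriv (fun t => X (ψ t) σ) s
      = deriv ψ s ^ 2 * ∑ ν, ∑ σ, Γ (X (ψ s)) μ ν σ * deriv (fun t => X t ν) (ψ s)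
        * deriv (fun t => X t σ) (ψ s) := by
    simp only [hvel, Finset.mul_sum]
    exact Finset.sum_congr rfl fun _ _ => Finset.sum_congr rfl fun _ _ => by ring
  have hYgeo := hcomp s hs μ
  beta_reduce at hYgeo
  rw [hacc, hquad] at hYgeo
  linear_combination hYgeo - deriv ψ s ^ 2 * hXgeo (ψ s) (hψIt hs) μ

theorem IsGeodesic.deriv_deriv_eq_zero_of_comp (hXgeo : IsGeodesic Γ I X) (hI : IsOpen I)
    (hX : ContDiffOn ℝ 2 X I) (hXreg : ∀ s ∈ I, ∃ μ : Fin n, deriv (fun t => X t μ) s ≠ 0)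
    (hIt : IsOpen It) (hψ : ContDiffOn ℝ 2 ψ It) (hψIt : MapsTo ψ It I)
    (hcomp : IsGeodesic Γ It (fun s => X (ψ s))) :
    EqOn (deriv (deriv ψ)) 0 It := fun s hs => by
  obtain ⟨μ, hμ⟩ := hXreg (ψ s) (hψIt hs)
  exact (mul_eq_zero.mp
    (hXgeo.deriv_mul_deriv_deriv_eq_zero_of_comp hI hX hIt hψ hψIt hcomp hs μ)).resolve_left hμ

end Reparametrization

theorem geodesic_reparam_affine_general
    {n : ℕ} (Γ : (Fin n → ℝ) → Fin n → Fin n → Fin n → ℝ)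
    (I : Set ℝ) (hIopen : IsOpen I)
    (X : ℝ → Fin n → ℝ) (hXsm : ContDiffOn ℝ ∞ X I)
    (hXgeo : IsGeodesic Γ I X)
    (hXreg : ∀ s ∈ I, ∃ μ : Fin n, deriv (fun t => X t μ) s ≠ 0)
    (It : Set ℝ) (hItopen : IsOpen It) (hItint : It.OrdConnected)
    (ψ : ℝ → ℝ) (hψsm : ContDiffOn ℝ ∞ ψ It) (hψmaps : ∀ s ∈ It, ψ s ∈ I)
    (hcomp : IsGeodesic Γ It (fun s => X (ψ s)))
    (hreg : ∀ s ∈ It, ∃ μ : Fin n, deriv (fun t => X (ψ t) μ) s ≠ 0) :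
    ∃ A B : ℝ, A ≠ 0 ∧ ∀ s ∈ It, ψ s = A * s + B := by
  rcases It.eq_empty_or_nonempty with rfl | ⟨s₀, hs₀⟩
  · exact ⟨1, 0, one_ne_zero, fun s hs => hs.elim⟩
  have hX : ContDiffOn ℝ 2 X I := hXsm.of_le (WithTop.coe_le_coe.mpr le_top)
  have hψ : ContDiffOn ℝ 2 ψ It := hψsm.of_le (WithTop.coe_le_coe.mpr le_top)
  obtain ⟨A, hA⟩ : ∃ A, ∀ s ∈ It, deriv ψ s = A :=
    hItopen.exists_is_const_of_deriv_eq_zero hItint.isPreconnected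
      ((hψ.deriv_of_isOpen hItopen le_rfl).differentiableOn one_ne_zero)
      (hXgeo.deriv_deriv_eq_zero_of_comp hIopen hX hXreg hItopen hψ hψmaps hcomp)
  obtain ⟨B, hB⟩ := hItopen.exists_eq_add_of_deriv_eq hItint.isPreconnected
    (hψ.differentiableOn two_ne_zero) (differentiableOn_id.const_mul A)
    (fun s hs => by simp [hA s hs])
  refine ⟨A, B, fun hA0 => ?_, hB⟩
  obtain ⟨μ, hμ⟩ := hreg s₀ hs₀
  rw [deriv_comp_of_contDiffOn hIopen hItopen ((contDiffOn_pi.mp hX μ).of_le one_le_two)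
    (hψ.of_le one_le_two) hψmaps hs₀, hA s₀ hs₀, hA0, zero_smul] at hμ
  exact hμ rfl

/-- A smooth reparametrization of a regular geodesic that is again a
regular geodesic is affine: `ψ s = A s + B` with `A ≠ 0`. -/
theorem geodesic_reparam_affine
    {n : ℕ} (hn : 2 ≤ n) (U : Set (Fin n → ℝ)) (hU : IsOpen U)
    (Γ : (Fin n → ℝ) → Fin n → Fin n → Fin n → ℝ) (hΓ : IsConnCoeff U Γ)
    (I : Set ℝ) (hIopen : IsOpen I) (hIint : I.OrdConnected)
    (X : ℝ → Fin n → ℝ) (hXU : ∀ s ∈ I, X s ∈ U) (hXsm : ContDiffOn ℝ ∞ X I)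
    (hXgeo : IsGeodesic Γ I X)
    (hXreg : ∀ s ∈ I, ∃ μ : Fin n, deriv (fun t => X t μ) s ≠ 0)
    (It : Set ℝ) (hItopen : IsOpen It) (hItint : It.OrdConnected)
    (ψ : ℝ → ℝ) (hψsm : ContDiffOn ℝ ∞ ψ It) (hψmaps : ∀ s ∈ It, ψ s ∈ I)
    (hcomp : IsGeodesic Γ It (fun s => X (ψ s)))
    (hreg : ∀ s ∈ It, ∃ μ : Fin n, deriv (fun t => X (ψ t) μ) s ≠ 0) :
    ∃ A B : ℝ, A ≠ 0 ∧ ∀ s ∈ It, ψ s = A * s + B :=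
  geodesic_reparam_affine_general Γ I hIopen X hXsm hXgeo hXreg It hItopen hItint ψ hψsm hψmaps
    hcomp hreg
end
end
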